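/- Let s, t ∈ ℝ with 0 ≤ s ≤ 4, t ≤ 2, and s ≥ t + 1. Then for all P, Q ∈ Γ_n with r ≤ p_i/q_i ≤ R for all i: ((r+1)/2)^{s−3} ((sr + 4 − s)/(4r^{t−2})) Φ_t(P||Q) ≤ ζ_s(P||Q) ≤ ((R+1)/2)^{s−3} ((sR + 4 − s)/(4R^{t−2})) Φ_t(P||Q). -/

import Mathlib

/-!
Both divergences are Csiszár `f`-divergences `∑ qᵢ f(pᵢ/qᵢ)`: `ζ_s` with the generator
`ψ_s(x) = (x - 1)((x + 1)/2)^(s-1)/(s - 1)` and `Φ_t` with `φ_t(x) = (x^t - 1)/(t(t - 1))`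
(logarithmic at the exceptional exponents), both vanishing at `1`. Their second derivatives are
`ψ_s'' = ((x + 1)/2)^(s-3) (s x + 4 - s)/4` and `φ_t'' = x^(t-2)`, and under the hypotheses on
`s, t` the ratio `g = ψ_s''/φ_t''` is increasing on `(0, ∞)`. Hence `ψ_s - g(r) φ_t` and
`g(R) φ_t - ψ_s` are convex on `[r, R]` and vanish at `1`; since the points `pᵢ/qᵢ` have mean
`∑ qᵢ (pᵢ/qᵢ) = 1` under the weights `qᵢ`, Jensen's inequality makes their `f`-divergences
nonnegative, which are the two bounds.
-/

open Real Finset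

/-- Relative information of type `s` (generalized Kullback-Leibler divergence). -/
noncomputable def Phi (n : ℕ) (s : ℝ) (p q : Fin n → ℝ) : ℝ :=
  if s = 0 then ∑ i, q i * Real.log (q i / p i)
  else if s = 1 then ∑ i, p i * Real.log (p i / q i)
  else (s * (s - 1))⁻¹ * ((∑ i, (p i) ^ s * (q i) ^ (1 - s)) - 1)

/-- Unified relative JS and AG divergence of type `s`. -/
noncomputable def Omega (n : ℕ) (s : ℝ) (p q : Fin n → ℝ) : ℝ :=
  if s = 0 then ∑ i, p i * Real.log (2 * p i / (p i + q i))
  else if s = 1 then ∑ i, ((p i + q i) / 2) * Real.log ((p i + q i) / (2 * p i))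
  else (s * (s - 1))⁻¹ * ((∑ i, p i * ((p i + q i) / (2 * p i)) ^ s) - 1)

/-- Relative J-divergence of type `s`. -/
noncomputable def zeta (n : ℕ) (s : ℝ) (p q : Fin n → ℝ) : ℝ :=
  if s = 1 then ∑ i, (p i - q i) * Real.log ((p i + q i) / (2 * q i))
  else (s - 1)⁻¹ * ∑ i, (p i - q i) * ((p i + q i) / (2 * q i)) ^ (s - 1)

lemma convexOn_of_hasDerivAt2_nonneg {D : Set ℝ} (hD : Convex ℝ D) {f f' f'' : ℝ → ℝ}
    (hf : ∀ x ∈ D, HasDerivAt f (f' x) x) (hf' : ∀ x ∈ D, HasDerivAt f' (f'' x) x)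
    (hf'' : ∀ x ∈ D, 0 ≤ f'' x) : ConvexOn ℝ D f :=
  convexOn_of_hasDerivWithinAt2_nonneg hD
    (fun x hx => (hf x hx).continuousAt.continuousWithinAt)
    (fun x hx => (hf x (interior_subset hx)).hasDerivWithinAt)
    (fun x hx => (hf' x (interior_subset hx)).hasDerivWithinAt)
    (fun x hx => hf'' x (interior_subset hx))

section FDiv

variable {ι : Type*} [Fintype ι]

noncomputable def fDiv (F : ℝ → ℝ) (p q : ι → ℝ) : ℝ := ∑ i, q i * F (p i / q i)

lemma fDiv_sub (F G : ℝ → ℝ) (p q : ι → ℝ) :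
    fDiv (fun x => F x - G x) p q = fDiv F p q - fDiv G p q := by
  simp only [fDiv, mul_sub, sum_sub_distrib]

lemma fDiv_const_mul (c : ℝ) (F : ℝ → ℝ) (p q : ι → ℝ) :
    fDiv (fun x => c * F x) p q = c * fDiv F p q := by
  simp only [fDiv, mul_sum, mul_left_comm]

lemma fDiv_nonneg_of_convexOn {F : ℝ → ℝ} {D : Set ℝ} (hF : ConvexOn ℝ D F) (hF1 : F 1 = 0)
    {p q : ι → ℝ} (hq : ∀ i, 0 < q i) (hp1 : ∑ i, p i = 1) (hq1 : ∑ i, q i = 1)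
    (hD : ∀ i, p i / q i ∈ D) : 0 ≤ fDiv F p q := by
  have hmean : ∑ i, q i * (p i / q i) = 1 := by
    rw [← hp1]
    exact sum_congr rfl fun i _ => mul_div_cancel₀ _ (hq i).ne'
  simpa only [fDiv, smul_eq_mul, hmean, hF1] using
    hF.map_sum_le (fun i _ => (hq i).le) hq1 fun i _ => hD i

lemma fDiv_le_fDiv_of_deriv2_le {D : Set ℝ} (hD : Convex ℝ D)
    {f f' f'' g g' g'' : ℝ → ℝ}
    (hf : ∀ x ∈ D, HasDerivAt f (f' x) x) (hf' : ∀ x ∈ D, HasDerivAt f' (f'' x) x)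
    (hg : ∀ x ∈ D, HasDerivAt g (g' x) x) (hg' : ∀ x ∈ D, HasDerivAt g' (g'' x) x)
    (hfg : ∀ x ∈ D, f'' x ≤ g'' x) (hfg1 : f 1 = g 1)
    {p q : ι → ℝ} (hq : ∀ i, 0 < q i) (hp1 : ∑ i, p i = 1) (hq1 : ∑ i, q i = 1)
    (hpq : ∀ i, p i / q i ∈ D) : fDiv f p q ≤ fDiv g p q := by
  have hconv : ConvexOn ℝ D fun x => g x - f x :=
    convexOn_of_hasDerivAt2_nonneg hD (fun x hx => (hg x hx).sub (hf x hx))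
      (fun x hx => (hg' x hx).sub (hf' x hx)) fun x hx => sub_nonneg.mpr (hfg x hx)
  have := fDiv_nonneg_of_convexOn hconv (sub_eq_zero.mpr hfg1.symm) hq hp1 hq1 hpq
  rwa [fDiv_sub, sub_nonneg] at this

end FDiv

noncomputable def zetaGen (s x : ℝ) : ℝ :=
  if s = 1 then (x - 1) * log ((x + 1) / 2) else (x - 1) * ((x + 1) / 2) ^ (s - 1) / (s - 1)

noncomputable def zetaGenDeriv (s x : ℝ) : ℝ :=
  if s = 1 then log ((x + 1) / 2) + (x - 1) / (x + 1)
  else ((x + 1) / 2) ^ (s - 1) / (s - 1) + (x - 1) * ((x + 1) / 2) ^ (s - 2) / 2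

noncomputable def zetaGenDeriv2 (s x : ℝ) : ℝ := ((x + 1) / 2) ^ (s - 3) * (s * x + 4 - s) / 4

noncomputable def phiGen (t x : ℝ) : ℝ :=
  if t = 0 then -log x else if t = 1 then x * log x else (x ^ t - 1) / (t * (t - 1))

noncomputable def phiGenDeriv (t x : ℝ) : ℝ :=
  if t = 0 then -x⁻¹ else if t = 1 then log x + 1 else x ^ (t - 1) / (t - 1)

lemma hasDerivAt_half_add_one (x : ℝ) : HasDerivAt (fun y : ℝ => (y + 1) / 2) (1 / 2) x :=
  ((hasDerivAt_id' x).add_const 1).div_const 2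

lemma hasDerivAt_zetaGen {s x : ℝ} (hx : -1 < x) : HasDerivAt (zetaGen s) (zetaGenDeriv s x) x := by
  have hu : (x + 1) / 2 ≠ 0 := by linarith
  unfold zetaGen zetaGenDeriv
  by_cases hs : s = 1
  · simp only [hs, ↓reduceIte]
    refine (((hasDerivAt_id' x).sub_const 1).mul ((hasDerivAt_half_add_one x).log hu)).congr_deriv ?_
    field_simp
  · have hs1 : s - 1 ≠ 0 := sub_ne_zero.mpr hs
    simp only [hs, ↓reduceIte]
    refine ((((hasDerivAt_id' x).sub_const 1).mul
      ((hasDerivAt_half_add_one x).rpow_const (p := s - 1) (Or.inl hu))).div_const (s - 1)).congr_deriv ?_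
    rw [show s - 1 - 1 = s - 2 by ring]
    field_simp

lemma hasDerivAt_zetaGenDeriv {s x : ℝ} (hx : -1 < x) :
    HasDerivAt (zetaGenDeriv s) (zetaGenDeriv2 s x) x := by
  have hu : 0 < (x + 1) / 2 := by linarith
  have hx1 : x + 1 ≠ 0 := by linarith
  unfold zetaGenDeriv zetaGenDeriv2
  by_cases hs : s = 1
  · simp only [hs, ↓reduceIte]
    refine (((hasDerivAt_half_add_one x).log hu.ne').add
      (((hasDerivAt_id' x).sub_const 1).div ((hasDerivAt_id' x).add_const 1) hx1)).congr_deriv ?_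
    rw [show (1 : ℝ) - 3 = -2 by norm_num, rpow_neg hu.le, rpow_two]
    field_simp
    ring
  · have hs1 : s - 1 ≠ 0 := sub_ne_zero.mpr hs
    simp only [hs, ↓reduceIte]
    refine ((((hasDerivAt_half_add_one x).rpow_const (p := s - 1) (Or.inl hu.ne')).div_const (s - 1)).add
      ((((hasDerivAt_id' x).sub_const 1).mul
        ((hasDerivAt_half_add_one x).rpow_const (p := s - 2) (Or.inl hu.ne'))).div_const 2)).congr_deriv ?_
    rw [show s - 1 - 1 = s - 2 by ring, show s - 2 - 1 = s - 3 by ring,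
      show s - 2 = s - 3 + 1 by ring, rpow_add_one hu.ne']
    field_simp
    ring

lemma hasDerivAt_phiGen {t x : ℝ} (hx : 0 < x) : HasDerivAt (phiGen t) (phiGenDeriv t x) x := by
  unfold phiGen phiGenDeriv
  by_cases ht0 : t = 0
  · simp only [ht0, ↓reduceIte]
    exact (hasDerivAt_log hx.ne').neg
  by_cases ht1 : t = 1
  · simp only [ht1, one_ne_zero, ↓reduceIte]
    refine ((hasDerivAt_id' x).mul (hasDerivAt_log hx.ne')).congr_deriv ?_
    field_simp
  · have ht1' : t - 1 ≠ 0 := sub_ne_zero.mpr ht1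
    simp only [ht0, ht1, ↓reduceIte]
    refine (((hasDerivAt_rpow_const (p := t) (Or.inl hx.ne')).sub_const 1).div_const (t * (t - 1))).congr_deriv ?_
    field_simp

lemma hasDerivAt_phiGenDeriv {t x : ℝ} (hx : 0 < x) :
    HasDerivAt (phiGenDeriv t) (x ^ (t - 2)) x := by
  unfold phiGenDeriv
  by_cases ht0 : t = 0
  · simp only [ht0, ↓reduceIte]
    refine ((hasDerivAt_inv hx.ne').neg).congr_deriv ?_
    rw [show (0 : ℝ) - 2 = -2 by norm_num, rpow_neg hx.le, rpow_two, neg_neg]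
  by_cases ht1 : t = 1
  · simp only [ht1, one_ne_zero, ↓reduceIte]
    refine ((hasDerivAt_log hx.ne').add_const 1).congr_deriv ?_
    rw [show (1 : ℝ) - 2 = -1 by norm_num, rpow_neg_one]
  · have ht1' : t - 1 ≠ 0 := sub_ne_zero.mpr ht1
    simp only [ht0, ht1, ↓reduceIte]
    refine ((hasDerivAt_rpow_const (p := t - 1) (Or.inl hx.ne')).div_const (t - 1)).congr_deriv ?_
    rw [show t - 1 - 1 = t - 2 by ring]
    field_simp

lemma zetaGen_one (s : ℝ) : zetaGen s 1 = 0 := by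
  unfold zetaGen; split_ifs <;> simp

lemma phiGen_one (t : ℝ) : phiGen t 1 = 0 := by
  unfold phiGen; split_ifs <;> simp

lemma zeta_eq_fDiv {n : ℕ} (s : ℝ) {p q : Fin n → ℝ} (hq : ∀ i, 0 < q i) :
    zeta n s p q = fDiv (zetaGen s) p q := by
  have hratio : ∀ i, (p i + q i) / (2 * q i) = (p i / q i + 1) / 2 := fun i => by
    field_simp [(hq i).ne']
  have hdiff : ∀ i, p i - q i = q i * (p i / q i - 1) := fun i => by
    field_simp [(hq i).ne']
  unfold zeta fDiv zetaGen
  by_cases hs : s = 1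
  · simp only [hs, ↓reduceIte, hratio, hdiff, mul_assoc]
  · simp only [hs, ↓reduceIte, hratio, hdiff, mul_sum]
    exact sum_congr rfl fun i _ => by ring

lemma Phi_eq_fDiv {n : ℕ} (t : ℝ) {p q : Fin n → ℝ} (hp : ∀ i, 0 ≤ p i) (hq : ∀ i, 0 < q i)
    (hq1 : ∑ i, q i = 1) : Phi n t p q = fDiv (phiGen t) p q := by
  unfold Phi fDiv phiGen
  by_cases ht0 : t = 0
  · simp only [ht0, ↓reduceIte, ← inv_div (p _), log_inv, mul_neg]
  by_cases ht1 : t = 1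
  · simp only [ht1, one_ne_zero, ↓reduceIte, ← mul_assoc, mul_div_cancel₀ _ (hq _).ne']
  · have hterm : ∀ i, p i ^ t * q i ^ (1 - t) = q i * (p i / q i) ^ t := fun i => by
      rw [div_rpow (hp i) (hq i).le, rpow_sub (hq i), rpow_one]
      field_simp [(rpow_pos_of_pos (hq i) t).ne']
    simp only [ht0, ht1, ↓reduceIte, hterm, mul_div_assoc', mul_sub, mul_one, sub_div,
      sum_sub_distrib, ← sum_div, hq1]
    ring

noncomputable def zetaPhiRatio (s t x : ℝ) : ℝ :=
  ((x + 1) / 2) ^ (s - 3) * ((s * x + 4 - s) / (4 * x ^ (t - 2)))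

lemma zetaGenDeriv2_eq_zetaPhiRatio_mul (s t : ℝ) {x : ℝ} (hx : 0 < x) :
    zetaGenDeriv2 s x = zetaPhiRatio s t x * x ^ (t - 2) := by
  unfold zetaGenDeriv2 zetaPhiRatio
  field_simp [(rpow_pos_of_pos hx (t - 2)).ne']

lemma zetaPhiRatio_eq (s t : ℝ) {x : ℝ} (hx : 0 < x) :
    zetaPhiRatio s t x = ((x + 1) / 2) ^ (s - 3) * (s * x + 4 - s) * x ^ (2 - t) / 4 := by
  rw [zetaPhiRatio, show 2 - t = -(t - 2) by ring, rpow_neg hx.le]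
  field_simp

lemma hasDerivAt_zetaPhiRatio (s t : ℝ) {x : ℝ} (hx : 0 < x) :
    HasDerivAt (zetaPhiRatio s t) (((x + 1) / 2) ^ (s - 4) * x ^ (1 - t) *
      (s * (s - t) * x ^ 2 + (8 * s - s ^ 2 - 4 - 4 * t) * x + (2 - t) * (4 - s)) / 8) x := by
  have hu : 0 < (x + 1) / 2 := by linarith
  have hlin : HasDerivAt (fun y : ℝ => s * y + 4 - s) s x := by
    simpa using (((hasDerivAt_id' x).const_mul s).add_const 4).sub_const s
  refine (((((hasDerivAt_half_add_one x).rpow_const (p := s - 3) (Or.inl hu.ne')).mul hlin).mul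
    (hasDerivAt_rpow_const (p := 2 - t) (Or.inl hx.ne'))).div_const 4).congr_of_eventuallyEq
    ?_ |>.congr_deriv ?_
  · filter_upwards [lt_mem_nhds hx] with y hy using zetaPhiRatio_eq s t hy
  · simp only [Pi.mul_apply]
    rw [show s - 3 - 1 = s - 4 by ring, show 2 - t - 1 = 1 - t by ring,
      show s - 3 = s - 4 + 1 by ring, rpow_add_one hu.ne', show 2 - t = 1 - t + 1 by ring,
      rpow_add_one hx.ne']
    ring

lemma monotoneOn_zetaPhiRatio {s t : ℝ} (hs0 : 0 ≤ s) (hs4 : s ≤ 4) (ht : t ≤ 2)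
    (hst : t + 1 ≤ s) : MonotoneOn (zetaPhiRatio s t) (Set.Ioi 0) := by
  refine monotoneOn_of_hasDerivWithinAt_nonneg (convex_Ioi 0)
    (fun x hx => (hasDerivAt_zetaPhiRatio s t hx).continuousAt.continuousWithinAt)
    (fun x hx => (hasDerivAt_zetaPhiRatio s t (interior_subset hx)).hasDerivWithinAt)
    fun x hx => ?_
  rw [interior_Ioi, Set.mem_Ioi] at hx
  -- every coefficient of the quadratic numerator is nonnegative; the middle one because `t ≤ s - 1`
  have hquad : 0 ≤ s * (s - t) * x ^ 2 + (8 * s - s ^ 2 - 4 - 4 * t) * x + (2 - t) * (4 - s) := by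
    have h2 : 0 ≤ s * (s - t) := mul_nonneg hs0 (by linarith)
    have h1 : 0 ≤ 8 * s - s ^ 2 - 4 - 4 * t := by nlinarith
    have h0 : 0 ≤ (2 - t) * (4 - s) := mul_nonneg (by linarith) (by linarith)
    positivity
  have := rpow_pos_of_pos (show 0 < (x + 1) / 2 by linarith) (s - 4)
  have := rpow_pos_of_pos hx (1 - t)
  positivity

theorem stmt_7_general (s t : ℝ) (hs0 : 0 ≤ s) (hs4 : s ≤ 4) (ht : t ≤ 2) (hst : t + 1 ≤ s)
    (n : ℕ) (p q : Fin n → ℝ)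
    (hp : ∀ i, 0 < p i) (hq : ∀ i, 0 < q i)
    (hp1 : ∑ i, p i = 1) (hq1 : ∑ i, q i = 1)
    (r R : ℝ) (hr : 0 < r)
    (hbound : ∀ i, r ≤ p i / q i ∧ p i / q i ≤ R) :
    ((r + 1) / 2) ^ (s - 3) * ((s * r + 4 - s) / (4 * r ^ (t - 2))) * Phi n t p q ≤ zeta n s p q ∧
      zeta n s p q ≤ ((R + 1) / 2) ^ (s - 3) * ((s * R + 4 - s) / (4 * R ^ (t - 2))) * Phi n t p q := by
  have hpos : ∀ x ∈ Set.Icc r R, 0 < x := fun x hx => hr.trans_le hx.1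
  have hψ : ∀ x ∈ Set.Icc r R, HasDerivAt (zetaGen s) (zetaGenDeriv s x) x :=
    fun x hx => hasDerivAt_zetaGen (by linarith [hpos x hx])
  have hψ' : ∀ x ∈ Set.Icc r R, HasDerivAt (zetaGenDeriv s) (zetaGenDeriv2 s x) x :=
    fun x hx => hasDerivAt_zetaGenDeriv (by linarith [hpos x hx])
  have hφ : ∀ c, ∀ x ∈ Set.Icc r R, HasDerivAt (fun y => c * phiGen t y) (c * phiGenDeriv t x) x :=
    fun c x hx => (hasDerivAt_phiGen (hpos x hx)).const_mul c
  have hφ' : ∀ c, ∀ x ∈ Set.Icc r R,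
      HasDerivAt (fun y => c * phiGenDeriv t y) (c * x ^ (t - 2)) x :=
    fun c x hx => (hasDerivAt_phiGenDeriv (hpos x hx)).const_mul c
  have hmono := monotoneOn_zetaPhiRatio hs0 hs4 ht hst
  have hgen1 : ∀ c, c * phiGen t 1 = zetaGen s 1 := by simp [phiGen_one, zetaGen_one]
  rw [zeta_eq_fDiv s hq, Phi_eq_fDiv t (fun i => (hp i).le) hq hq1, ← fDiv_const_mul,
    ← fDiv_const_mul]
  constructor
  · refine fDiv_le_fDiv_of_deriv2_le (convex_Icc r R) (hφ _) (hφ' _) hψ hψ' (fun x hx => ?_)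
      (hgen1 _) hq hp1 hq1 hbound
    rw [zetaGenDeriv2_eq_zetaPhiRatio_mul s t (hpos x hx)]
    exact mul_le_mul_of_nonneg_right (hmono hr (hpos x hx) hx.1) (rpow_nonneg (hpos x hx).le _)
  · refine fDiv_le_fDiv_of_deriv2_le (convex_Icc r R) hψ hψ' (hφ _) (hφ' _) (fun x hx => ?_)
      (hgen1 _).symm hq hp1 hq1 hbound
    rw [zetaGenDeriv2_eq_zetaPhiRatio_mul s t (hpos x hx)]
    exact mul_le_mul_of_nonneg_right (hmono (hpos x hx) ((hpos x hx).trans_le hx.2) hx.2)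
      (rpow_nonneg (hpos x hx).le _)

theorem stmt_7 (s t : ℝ) (hs0 : 0 ≤ s) (hs4 : s ≤ 4) (ht : t ≤ 2) (hst : t + 1 ≤ s)
    (n : ℕ) (hn : 2 ≤ n) (p q : Fin n → ℝ)
    (hp : ∀ i, 0 < p i) (hq : ∀ i, 0 < q i)
    (hp1 : ∑ i, p i = 1) (hq1 : ∑ i, q i = 1)
    (r R : ℝ) (hr : 0 < r) (hrR : r ≤ R)
    (hbound : ∀ i, r ≤ p i / q i ∧ p i / q i ≤ R) :
    ((r + 1) / 2) ^ (s - 3) * ((s * r + 4 - s) / (4 * r ^ (t - 2))) * Phi n t p q ≤ zeta n s p q ∧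
      zeta n s p q ≤ ((R + 1) / 2) ^ (s - 3) * ((s * R + 4 - s) / (4 * R ^ (t - 2))) * Phi n t p q :=
  stmt_7_general s t hs0 hs4 ht hst n p q hp hq hp1 hq1 r R hr hbound
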